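/- Suppose α lies in the fundamental domain of Q and is sincere. Then either Q is an affine quiver and α is isotropic, or the full subquiver of Q on the vertex set N_α is a disjoint union of Dynkin quivers. -/
import Mathlib


/-- Coerce a dimension vector with natural number entries to an integer vector. -/
def natToInt {n : ℕ} (d : Fin n → ℕ) : Fin n → ℤ := fun i => (d i : ℤ)

/-- A finite quiver with vertex set `Fin n` and arrow set `Fin arrows`,
`s` and `t` assign to each arrow its source and target. -/
structure FinQuiver where
  n : ℕ
  arrows : ℕ
  s : Fin arrows → Fin n
  t : Fin arrows → Fin n

namespace FinQuiver

variable (Q : FinQuiver) (k : Type) [Field k]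

/-- There is an arrow from `i` to `j`. -/
def Adj (i j : Fin Q.n) : Prop := ∃ a, Q.s a = i ∧ Q.t a = j

/-- The quiver has no oriented cycles. -/
def Acyclic : Prop := ∀ i, ¬ Relation.TransGen Q.Adj i i

/-- Undirected adjacency inside a set of vertices. -/
def AdjIn (S : Set (Fin Q.n)) (i j : Fin Q.n) : Prop :=
  i ∈ S ∧ j ∈ S ∧ (Q.Adj i j ∨ Q.Adj j i)

/-- The full subquiver on the vertex set `S` is connected. -/
def ConnectedSet (S : Set (Fin Q.n)) : Prop :=
  ∀ i ∈ S, ∀ j ∈ S, Relation.ReflTransGen (Q.AdjIn S) i j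

/-- The quiver is connected. -/
def Connected : Prop := Q.ConnectedSet Set.univ

/-- A point of the representation variety `rep_d Q`: a matrix for every arrow. -/
def Rep (d : Fin Q.n → ℕ) : Type :=
  ∀ a : Fin Q.arrows, Matrix (Fin (d (Q.t a))) (Fin (d (Q.s a))) k

/-- `f` is a homomorphism of representations from `M` to `N`. -/
def IsHom {d e : Fin Q.n → ℕ} (M : Q.Rep k d) (N : Q.Rep k e)
    (f : ∀ i, Matrix (Fin (e i)) (Fin (d i)) k) : Prop :=
  ∀ a, f (Q.t a) * M a = N a * f (Q.s a)

/-- The space of homomorphisms of representations `M → N`. -/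
def HomSpace {d e : Fin Q.n → ℕ} (M : Q.Rep k d) (N : Q.Rep k e) :
    Submodule k (∀ i, Matrix (Fin (e i)) (Fin (d i)) k) where
  carrier := {f | Q.IsHom k M N f}
  add_mem' := by
    intro f g hf hg
    have hf' : Q.IsHom k M N f := hf
    have hg' : Q.IsHom k M N g := hg
    intro a
    simp only [Pi.add_apply, Matrix.add_mul, Matrix.mul_add, hf' a, hg' a]
  zero_mem' := by
    intro a
    simp
  smul_mem' := by
    intro c f hf
    have hf' : Q.IsHom k M N f := hf
    intro a
    simp only [Pi.smul_apply, Matrix.smul_mul, Matrix.mul_smul, hf' a]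

/-- `dim Hom_Q(M, N)`. -/
noncomputable def homDim {d e : Fin Q.n → ℕ} (M : Q.Rep k d) (N : Q.Rep k e) : ℕ :=
  Module.finrank k (Q.HomSpace k M N)

/-- The linear map whose cokernel is `Ext^1_Q(M, N)` (using the standard
projective resolution of a representation of a quiver). -/
def extMap {d e : Fin Q.n → ℕ} (M : Q.Rep k d) (N : Q.Rep k e) :
    (∀ i, Matrix (Fin (e i)) (Fin (d i)) k) →ₗ[k]
      (∀ a : Fin Q.arrows, Matrix (Fin (e (Q.t a))) (Fin (d (Q.s a))) k) where
  toFun f := fun a => f (Q.t a) * M a - N a * f (Q.s a)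
  map_add' f g := by
    funext a
    simp only [Pi.add_apply, Matrix.add_mul, Matrix.mul_add]
    abel
  map_smul' c f := by
    funext a
    simp only [Pi.smul_apply, Matrix.smul_mul, Matrix.mul_smul, smul_sub, RingHom.id_apply]

/-- `dim Ext^1_Q(M, N)`. -/
noncomputable def extDim {d e : Fin Q.n → ℕ} (M : Q.Rep k d) (N : Q.Rep k e) : ℕ :=
  Module.finrank k
    ((∀ a : Fin Q.arrows, Matrix (Fin (e (Q.t a))) (Fin (d (Q.s a))) k) ⧸
      LinearMap.range (Q.extMap k M N))

/-- The generic (minimal) value of `dim Hom(M, N)` for `M ∈ rep_d Q`, `N ∈ rep_e Q`. -/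
noncomputable def genHom (d e : Fin Q.n → ℕ) : ℕ :=
  sInf {m | ∃ (M : Q.Rep k d) (N : Q.Rep k e), Q.homDim k M N = m}

/-- The generic (minimal) value of `dim Ext^1(M, N)` for `M ∈ rep_d Q`, `N ∈ rep_e Q`. -/
noncomputable def genExt (d e : Fin Q.n → ℕ) : ℕ :=
  sInf {m | ∃ (M : Q.Rep k d) (N : Q.Rep k e), Q.extDim k M N = m}

/-- Two dimension vectors are ext-orthogonal. -/
def ExtOrth (d e : Fin Q.n → ℕ) : Prop :=
  Q.genExt k d e = 0 ∧ Q.genExt k e d = 0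

/-- A representation is indecomposable iff it is nonzero and its endomorphism
ring has no nontrivial idempotents. -/
def Indecomposable {d : Fin Q.n → ℕ} (M : Q.Rep k d) : Prop :=
  d ≠ 0 ∧ ∀ f ∈ Q.HomSpace k M M, (∀ i, f i * f i = f i) →
    f = 0 ∨ f = fun i => (1 : Matrix (Fin (d i)) (Fin (d i)) k)

/-- `d` is a root: some representation of dimension vector `d` is indecomposable. -/
def IsRoot (d : Fin Q.n → ℕ) : Prop := ∃ M : Q.Rep k d, Q.Indecomposable k M

/-- A representation is Schurian iff it is nonzero and all endomorphisms are scalar. -/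
def Schurian {d : Fin Q.n → ℕ} (M : Q.Rep k d) : Prop :=
  d ≠ 0 ∧ ∀ f ∈ Q.HomSpace k M M, ∃ c : k,
    f = fun i => c • (1 : Matrix (Fin (d i)) (Fin (d i)) k)

/-- `d` is a Schur root. -/
def IsSchurRoot (d : Fin Q.n → ℕ) : Prop := ∃ M : Q.Rep k d, Q.Schurian k M

/-- The Euler form of the quiver. -/
def euler (a b : Fin Q.n → ℤ) : ℤ :=
  (∑ i, a i * b i) - ∑ f : Fin Q.arrows, a (Q.s f) * b (Q.t f)

/-- The symmetrized Euler form. -/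
def symEuler (a b : Fin Q.n → ℤ) : ℤ := Q.euler a b + Q.euler b a

/-- The Tits form. -/
def tits (a : Fin Q.n → ℤ) : ℤ := Q.euler a a

/-- The `i`-th standard basis vector of `ℤ^n`. -/
def basisVec (i : Fin Q.n) : Fin Q.n → ℤ := fun j => if j = i then 1 else 0

/-- The support of a dimension vector. -/
def support (d : Fin Q.n → ℕ) : Set (Fin Q.n) := {i | d i ≠ 0}

/-- `d` lies in the fundamental domain. -/
def InFund (d : Fin Q.n → ℕ) : Prop :=
  (∀ i, Q.symEuler (natToInt d) (Q.basisVec i) ≤ 0) ∧ Q.ConnectedSet (Q.support d)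

/-- `d` is a fundamental root: a root lying in the fundamental domain. -/
def IsFundRoot (d : Fin Q.n → ℕ) : Prop := Q.IsRoot k d ∧ Q.InFund d

/-- The null-cone of a vector. -/
def nullCone (a : Fin Q.n → ℤ) : Set (Fin Q.n) := {i | Q.symEuler (Q.basisVec i) a = 0}

/-- Two vertex sets are totally disconnected: disjoint and no arrow between them. -/
def TotallyDisc (S T : Set (Fin Q.n)) : Prop :=
  (∀ i, ¬(i ∈ S ∧ i ∈ T)) ∧
  ∀ a : Fin Q.arrows, ¬(Q.s a ∈ S ∧ Q.t a ∈ T) ∧ ¬(Q.s a ∈ T ∧ Q.t a ∈ S)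

/-- The Tits form is positive semidefinite. -/
def PosSemidef : Prop := ∀ x : Fin Q.n → ℤ, 0 ≤ Q.tits x

/-- The Tits form is positive definite. -/
def PosDef : Prop := ∀ x : Fin Q.n → ℤ, x ≠ 0 → 0 < Q.tits x

/-- Affine (extended Dynkin) quiver. -/
def IsAffine : Prop := Q.Connected ∧ Q.PosSemidef ∧ ¬ Q.PosDef

/-- Wild quiver. -/
def IsWild : Prop := Q.Connected ∧ ¬ Q.PosSemidef

/-- `δ` is the smallest positive isotropic root. -/
def IsDelta (δ : Fin Q.n → ℕ) : Prop :=
  Q.IsRoot k δ ∧ Q.tits (natToInt δ) = 0 ∧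
    ∀ d, Q.IsRoot k d → Q.tits (natToInt d) = 0 → ∀ i, δ i ≤ d i

/-- A component cluster: a maximal set of pairwise ext-orthogonal distinct Schur roots. -/
def IsCompCluster (C : Set (Fin Q.n → ℕ)) : Prop :=
  (∀ d ∈ C, Q.IsSchurRoot k d) ∧
  (∀ d ∈ C, ∀ e ∈ C, d ≠ e → Q.ExtOrth k d e) ∧
  (∀ d, Q.IsSchurRoot k d → (∀ e ∈ C, d ≠ e → Q.ExtOrth k d e) → d ∈ C)

/-- A generalized Schur root: a (positive) Schur root or a negative Schur root `-eᵢ`. -/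
def IsGenSchurRoot (z : Fin Q.n → ℤ) : Prop :=
  (∃ d, Q.IsSchurRoot k d ∧ z = natToInt d) ∨ ∃ i, z = -Q.basisVec i

/-- Ext-orthogonality for generalized Schur roots. -/
def GenExtOrth (z w : Fin Q.n → ℤ) : Prop :=
  (∃ d e, z = natToInt d ∧ w = natToInt e ∧ Q.ExtOrth k d e) ∨
  (∃ i d, z = -Q.basisVec i ∧ w = natToInt d ∧ d i = 0) ∨
  (∃ i d, w = -Q.basisVec i ∧ z = natToInt d ∧ d i = 0) ∨
  (∃ i j, z = -Q.basisVec i ∧ w = -Q.basisVec j)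

/-- A component cluster of generalized (positive or negative) Schur roots. -/
def IsGenCompCluster (C : Set (Fin Q.n → ℤ)) : Prop :=
  (∀ z ∈ C, Q.IsGenSchurRoot k z) ∧
  (∀ z ∈ C, ∀ w ∈ C, z ≠ w → Q.GenExtOrth k z w) ∧
  (∀ z, Q.IsGenSchurRoot k z → (∀ w ∈ C, z ≠ w → Q.GenExtOrth k z w) → z ∈ C)

/-- For an affine quiver with minimal isotropic root `δ`, an indecomposable
representation is regular iff its dimension vector `d` satisfies `⟨d, δ⟩ = 0`. -/
def IsRegularIndec (δ : Fin Q.n → ℕ) {d : Fin Q.n → ℕ} (M : Q.Rep k d) : Prop :=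
  Q.Indecomposable k M ∧ Q.euler (natToInt d) (natToInt δ) = 0

/-- One step of the "same tube" relation: two regular indecomposables with a
nonzero homomorphism between them (in one direction or the other). -/
def TubeStep (δ : Fin Q.n → ℕ) (X Y : Σ d : Fin Q.n → ℕ, Q.Rep k d) : Prop :=
  Q.IsRegularIndec k δ X.2 ∧ Q.IsRegularIndec k δ Y.2 ∧
    (Q.homDim k X.2 Y.2 ≠ 0 ∨ Q.homDim k Y.2 X.2 ≠ 0)

/-- Two regular indecomposable representations lie in the same tube iff they are
connected by a chain of nonzero homomorphisms through regular indecomposables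
(tubes are the blocks of the category of regular modules). -/
def SameTube (δ : Fin Q.n → ℕ) (X Y : Σ d : Fin Q.n → ℕ, Q.Rep k d) : Prop :=
  Q.IsRegularIndec k δ X.2 ∧ Q.IsRegularIndec k δ Y.2 ∧
    Relation.ReflTransGen (Q.TubeStep k δ) X Y

/-- A root of an affine quiver is preprojective iff `⟨d, δ⟩ < 0`. -/
def IsPreprojRoot (δ : Fin Q.n → ℕ) (d : Fin Q.n → ℕ) : Prop :=
  Q.IsRoot k d ∧ Q.euler (natToInt d) (natToInt δ) < 0

/-- A root of an affine quiver is preinjective iff `⟨d, δ⟩ > 0`. -/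
def IsPreinjRoot (δ : Fin Q.n → ℕ) (d : Fin Q.n → ℕ) : Prop :=
  Q.IsRoot k d ∧ 0 < Q.euler (natToInt d) (natToInt δ)

/-- `L` is the generic decomposition of `d`: a list of Schur roots summing to `d`
with pairwise vanishing generic extensions. -/
def IsGenDecomp (d : Fin Q.n → ℕ) (L : List (Fin Q.n → ℕ)) : Prop :=
  L.sum = d ∧ (∀ e ∈ L, Q.IsSchurRoot k e) ∧
    L.Pairwise (fun a b => Q.genExt k a b = 0 ∧ Q.genExt k b a = 0)

/-- The simple reflection at vertex `i`: `a ↦ a - (a, eᵢ)·eᵢ`. -/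
def simpleRefl (i : Fin Q.n) : Function.End (Fin Q.n → ℤ) :=
  fun a => a - Q.symEuler a (Q.basisVec i) • Q.basisVec i

/-- Membership in the Weyl group: a composite of simple reflections. -/
def InWeyl (w : Function.End (Fin Q.n → ℤ)) : Prop :=
  w ∈ Submonoid.closure (Set.range Q.simpleRefl)

/-- Two component clusters are related by a mutation. -/
def Mutation (C₁ C₂ : Set (Fin Q.n → ℕ)) : Prop :=
  (C₁ ∩ C₂).ncard = min C₁.ncard C₂.ncard - 1

/-- Two generalized component clusters are related by a mutation. -/
def GenMutation (C₁ C₂ : Set (Fin Q.n → ℤ)) : Prop :=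
  (C₁ ∩ C₂).ncard = min C₁.ncard C₂.ncard - 1

/-- `M` is the indecomposable projective at vertex `e`,
characterized by `dim Hom(P_e, N) = (dim N)_e` for all `N`. -/
def IsProjAt (e : Fin Q.n) {d : Fin Q.n → ℕ} (M : Q.Rep k d) : Prop :=
  ∀ (b : Fin Q.n → ℕ) (N : Q.Rep k b), Q.homDim k M N = b e

/-- `M` is the indecomposable injective at vertex `e`,
characterized by `dim Hom(N, I_e) = (dim N)_e` for all `N`. -/
def IsInjAt (e : Fin Q.n) {d : Fin Q.n → ℕ} (M : Q.Rep k d) : Prop :=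
  ∀ (b : Fin Q.n → ℕ) (N : Q.Rep k b), Q.homDim k N M = b e

/-- The coordinates of a point of the representation variety. -/
def coords {d : Fin Q.n → ℕ} (M : Q.Rep k d) :
    (Σ a : Fin Q.arrows, Fin (d (Q.t a)) × Fin (d (Q.s a))) → k :=
  fun x => M x.1 x.2.1 x.2.2

/-- A Zariski-closed subset of the representation variety. -/
def IsZClosed {d : Fin Q.n → ℕ} (S : Set (Q.Rep k d)) : Prop :=
  ∃ I : Set (MvPolynomial (Σ a : Fin Q.arrows, Fin (d (Q.t a)) × Fin (d (Q.s a))) k),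
    S = {M | ∀ p ∈ I, MvPolynomial.eval (Q.coords k M) p = 0}

/-- A Zariski-open subset of the representation variety. -/
def IsZOpen {d : Fin Q.n → ℕ} (S : Set (Q.Rep k d)) : Prop := Q.IsZClosed k Sᶜ

/-- A Zariski-dense subset of the representation variety. -/
def IsZDense {d : Fin Q.n → ℕ} (S : Set (Q.Rep k d)) : Prop :=
  ∀ V : Set (Q.Rep k d), Q.IsZOpen k V → V.Nonempty → (S ∩ V).Nonempty

/-- `0 → A → B → C → 0` is a short exact sequence of representations,
with maps `f : A → B` and `g : B → C`. -/
def IsSES {d e : Fin Q.n → ℕ} (A : Q.Rep k d) (B : Q.Rep k (d + e)) (C : Q.Rep k e)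
    (f : ∀ i, Matrix (Fin ((d + e) i)) (Fin (d i)) k)
    (g : ∀ i, Matrix (Fin (e i)) (Fin ((d + e) i)) k) : Prop :=
  Q.IsHom k A B f ∧ Q.IsHom k B C g ∧
    ∀ i, Function.Injective (Matrix.mulVecLin (f i)) ∧
      Function.Surjective (Matrix.mulVecLin (g i)) ∧
      LinearMap.range (Matrix.mulVecLin (f i)) = LinearMap.ker (Matrix.mulVecLin (g i))

/-- The short exact sequence with projection `g : B → C` splits. -/
def IsSplitSES {d e : Fin Q.n → ℕ} (B : Q.Rep k (d + e)) (C : Q.Rep k e)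
    (g : ∀ i, Matrix (Fin (e i)) (Fin ((d + e) i)) k) : Prop :=
  ∃ h : ∀ i, Matrix (Fin ((d + e) i)) (Fin (e i)) k,
    Q.IsHom k C B h ∧ ∀ i, g i * h i = 1

end FinQuiver
namespace FinQuiver
variable (Q : FinQuiver)

lemma symEuler_basis' (α : Fin Q.n → ℕ) (i : Fin Q.n) :
    Q.symEuler (natToInt α) (Q.basisVec i)
      = 2 * (α i : ℤ) - (∑ f : Fin Q.arrows, if Q.t f = i then (α (Q.s f) : ℤ) else 0)
        - ∑ f : Fin Q.arrows, if Q.s f = i then (α (Q.t f) : ℤ) else 0 := by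
  simp only [symEuler, euler, basisVec, natToInt, mul_ite, ite_mul, mul_one, mul_zero,
    one_mul, zero_mul, Finset.sum_ite_eq', Finset.mem_univ, if_true]
  ring

lemma key_identity (α : Fin Q.n → ℕ) (hs : ∀ i, 0 < α i) (x : Fin Q.n → ℤ) :
    (∑ f : Fin Q.arrows,
        ((α (Q.t f) : ℚ) * (x (Q.s f) : ℚ) - (α (Q.s f) : ℚ) * (x (Q.t f) : ℚ)) ^ 2
          / ((α (Q.s f) : ℚ) * (α (Q.t f) : ℚ)))
      + ∑ i, ((x i : ℚ) ^ 2 / (α i : ℚ)) * (Q.symEuler (natToInt α) (Q.basisVec i) : ℚ)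
      = 2 * (Q.tits x : ℚ) := by
  have hA : ∀ j, (α j : ℚ) ≠ 0 := fun j => by exact_mod_cast (hs j).ne'
  have h2 : ∀ i, ((x i : ℚ) ^ 2 / (α i : ℚ)) * (Q.symEuler (natToInt α) (Q.basisVec i) : ℚ)
      = 2 * (x i : ℚ) ^ 2
        - (∑ f : Fin Q.arrows, if Q.t f = i then ((x i : ℚ) ^ 2 / (α i : ℚ)) * (α (Q.s f) : ℚ) else 0)
        - ∑ f : Fin Q.arrows, if Q.s f = i then ((x i : ℚ) ^ 2 / (α i : ℚ)) * (α (Q.t f) : ℚ) else 0 := by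
    intro i
    rw [Q.symEuler_basis']
    push_cast
    rw [mul_sub, mul_sub, Finset.mul_sum, Finset.mul_sum]
    simp only [mul_ite, mul_zero]
    have h1 : (x i : ℚ) ^ 2 / (α i : ℚ) * (2 * (α i : ℚ)) = 2 * (x i : ℚ) ^ 2 := by
      rw [div_mul_eq_mul_div, div_eq_iff (hA i)]; ring
    rw [h1]
  have hswap : ∀ (g : Fin Q.n → Fin Q.arrows → ℚ) (v : Fin Q.arrows → Fin Q.n),
      (∑ i, ∑ f, if v f = i then g i f else 0) = ∑ f, g (v f) f := by
    intro g v
    rw [Finset.sum_comm]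
    simp [Finset.sum_ite_eq]
  rw [Finset.sum_congr rfl (fun i _ => h2 i), Finset.sum_sub_distrib, Finset.sum_sub_distrib,
    hswap (fun i f => ((x i : ℚ) ^ 2 / (α i : ℚ)) * (α (Q.s f) : ℚ)) Q.t,
    hswap (fun i f => ((x i : ℚ) ^ 2 / (α i : ℚ)) * (α (Q.t f) : ℚ)) Q.s]
  rw [show (∑ f : Fin Q.arrows,
        ((α (Q.t f) : ℚ) * (x (Q.s f) : ℚ) - (α (Q.s f) : ℚ) * (x (Q.t f) : ℚ)) ^ 2
          / ((α (Q.s f) : ℚ) * (α (Q.t f) : ℚ)))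
      = ∑ f : Fin Q.arrows, ((x (Q.t f) : ℚ) ^ 2 / (α (Q.t f) : ℚ) * (α (Q.s f) : ℚ)
          + (x (Q.s f) : ℚ) ^ 2 / (α (Q.s f) : ℚ) * (α (Q.t f) : ℚ)
          - 2 * (x (Q.s f) : ℚ) * (x (Q.t f) : ℚ)) from
    Finset.sum_congr rfl fun f _ => by
      have hs' := hA (Q.s f); have ht' := hA (Q.t f); field_simp; ring]
  rw [tits, euler]
  push_cast
  have e1 : (∑ i : Fin Q.n, 2 * (x i : ℚ) ^ 2) = 2 * ∑ i : Fin Q.n, (x i : ℚ) * (x i : ℚ) := by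
    rw [Finset.mul_sum]; exact Finset.sum_congr rfl fun i _ => by ring
  have e2 : (∑ f : Fin Q.arrows, 2 * (x (Q.s f) : ℚ) * (x (Q.t f) : ℚ))
      = 2 * ∑ f : Fin Q.arrows, (x (Q.s f) : ℚ) * (x (Q.t f) : ℚ) := by
    rw [Finset.mul_sum]; exact Finset.sum_congr rfl fun f _ => by ring
  rw [Finset.sum_sub_distrib, Finset.sum_add_distrib, e1, e2]
  ring

end FinQuiver

/-- If `α` lies in the fundamental domain and is sincere, then either
`Q` is affine and `α` is isotropic, or the full subquiver on the null-cone `N_α`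
is a disjoint union of Dynkin quivers (i.e. the Tits form is positive definite on
vectors supported on `N_α`). -/
theorem sincere_fundamental_nullcone_dynkin
    (Q : FinQuiver) (k : Type) [Field k]
    (hacyc : Q.Acyclic) (hconn : Q.Connected)
    (α : Fin Q.n → ℕ) (hF : Q.InFund α) (hsinc : ∀ i, 0 < α i) :
    (Q.IsAffine ∧ Q.tits (natToInt α) = 0) ∨
    (∀ x : Fin Q.n → ℤ, x ≠ 0 →
      (∀ i, x i ≠ 0 → i ∈ Q.nullCone (natToInt α)) → 0 < Q.tits x) := by
  classical
  have hA0 : ∀ j, (0:ℚ) < (α j : ℚ) := fun j => by exact_mod_cast hsinc j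
  have hA : ∀ j, (α j : ℚ) ≠ 0 := fun j => (hA0 j).ne'
  have hT : ∀ (x : Fin Q.n → ℤ) (f : Fin Q.arrows),
      0 ≤ ((α (Q.t f) : ℚ) * (x (Q.s f) : ℚ) - (α (Q.s f) : ℚ) * (x (Q.t f) : ℚ)) ^ 2
        / ((α (Q.s f) : ℚ) * (α (Q.t f) : ℚ)) :=
    fun x f => div_nonneg (sq_nonneg _) (le_of_lt (mul_pos (hA0 _) (hA0 _)))
  rcases Nat.eq_zero_or_pos Q.n with h0 | hn
  · right
    intro x hx _
    exact absurd (funext fun i => absurd i.2 (by omega)) hx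
  by_cases hall : ∀ i, Q.symEuler (natToInt α) (Q.basisVec i) = 0
  · left
    have hps : Q.PosSemidef := by
      intro y
      have hk := Q.key_identity α hsinc y
      simp only [hall, Int.cast_zero, mul_zero, Finset.sum_const_zero, add_zero] at hk
      have h1 : (0:ℚ) ≤ 2 * (Q.tits y : ℚ) := hk ▸ Finset.sum_nonneg fun f _ => hT y f
      have h2 : (0:ℚ) ≤ (Q.tits y : ℚ) := by linarith
      exact_mod_cast h2
    have hiso : Q.tits (natToInt α) = 0 := by
      have hk := Q.key_identity α hsinc (natToInt α)
      simp only [hall, Int.cast_zero, mul_zero, Finset.sum_const_zero, add_zero] at hk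
      have hz : ∀ f ∈ (Finset.univ : Finset (Fin Q.arrows)),
          ((α (Q.t f) : ℚ) * ((natToInt α) (Q.s f) : ℚ)
            - (α (Q.s f) : ℚ) * ((natToInt α) (Q.t f) : ℚ)) ^ 2
              / ((α (Q.s f) : ℚ) * (α (Q.t f) : ℚ)) = 0 := by
        intro f _
        have hnum : ((α (Q.t f) : ℚ) * ((natToInt α) (Q.s f) : ℚ)
            - (α (Q.s f) : ℚ) * ((natToInt α) (Q.t f) : ℚ)) = 0 := by
          simp only [natToInt, Int.cast_natCast]
          ring
        rw [hnum]
        simp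
      rw [Finset.sum_eq_zero hz] at hk
      have : (Q.tits (natToInt α) : ℚ) = 0 := by linarith
      exact_mod_cast this
    refine ⟨⟨hconn, hps, ?_⟩, hiso⟩
    intro hpd
    have hne : natToInt α ≠ 0 := by
      intro h
      have h0' := congrFun h ⟨0, hn⟩
      simp only [natToInt, Pi.zero_apply, Int.natCast_eq_zero] at h0'
      exact (hsinc ⟨0, hn⟩).ne' h0'
    have := hpd (natToInt α) hne
    rw [hiso] at this
    exact lt_irrefl 0 this
  · right
    push_neg at hall
    obtain ⟨i₀, hi₀⟩ := hall
    intro x hx hnull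
    have hσx : ∀ i, x i ≠ 0 → Q.symEuler (natToInt α) (Q.basisVec i) = 0 := by
      intro i hxi
      have h := hnull i hxi
      simp only [FinQuiver.nullCone, Set.mem_setOf_eq, FinQuiver.symEuler] at h ⊢
      linarith
    have hk := Q.key_identity α hsinc x
    have hzero2 : ∀ i ∈ (Finset.univ : Finset (Fin Q.n)),
        ((x i : ℚ) ^ 2 / (α i : ℚ)) * (Q.symEuler (natToInt α) (Q.basisVec i) : ℚ) = 0 := by
      intro i _
      by_cases h : x i = 0
      · simp [h]
      · simp [hσx i h]
    rw [Finset.sum_eq_zero hzero2, add_zero] at hk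
    have hnn : (0:ℚ) ≤ 2 * (Q.tits x : ℚ) := hk ▸ Finset.sum_nonneg fun f _ => hT x f
    by_contra hle
    push_neg at hle
    have htits0 : Q.tits x = 0 := by
      have : (0:ℚ) ≤ (Q.tits x : ℚ) := by linarith
      have h2 : (0:ℤ) ≤ Q.tits x := by exact_mod_cast this
      omega
    rw [htits0] at hk
    norm_num at hk
    have hzf := (Finset.sum_eq_zero_iff_of_nonneg (fun f _ => hT x f)).mp hk
    have harrow : ∀ f : Fin Q.arrows,
        (α (Q.t f) : ℚ) * (x (Q.s f) : ℚ) = (α (Q.s f) : ℚ) * (x (Q.t f) : ℚ) := by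
      intro f
      have h := hzf f (Finset.mem_univ f)
      rw [div_eq_zero_iff] at h
      rcases h with h | h
      · exact sub_eq_zero.mp ((pow_eq_zero_iff two_ne_zero).mp h)
      · exact absurd h (mul_pos (hA0 _) (hA0 _)).ne'
    have hprop : ∀ i j : Fin Q.n, Relation.ReflTransGen (Q.AdjIn Set.univ) i j →
        (x i : ℚ) * (α j : ℚ) = (x j : ℚ) * (α i : ℚ) := by
      intro i j h
      induction h with
      | refl => rfl
      | @tail b c hab hbc ih =>
        obtain ⟨-, -, hadj⟩ := hbc
        have hstep : (x b : ℚ) * (α c : ℚ) = (x c : ℚ) * (α b : ℚ) := by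
          rcases hadj with ⟨a, ha1, ha2⟩ | ⟨a, ha1, ha2⟩
          · have h' := harrow a
            rw [ha1, ha2] at h'
            linear_combination h'
          · have h' := harrow a
            rw [ha1, ha2] at h'
            linear_combination -h'
        have hkey : (x i : ℚ) * (α c : ℚ) * (α b : ℚ)
            = (x c : ℚ) * (α i : ℚ) * (α b : ℚ) := by
          linear_combination (α c : ℚ) * ih + (α i : ℚ) * hstep
        exact mul_right_cancel₀ (hA b) hkey
    obtain ⟨i, hxi⟩ := Function.ne_iff.mp hx
    have hpe := hprop i i₀ (hconn i (Set.mem_univ i) i₀ (Set.mem_univ i₀))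
    have hxi₀ : x i₀ = 0 := by
      by_contra h
      exact hi₀ (hσx i₀ h)
    rw [hxi₀] at hpe
    simp only [Int.cast_zero, zero_mul] at hpe
    rcases mul_eq_zero.mp hpe with h | h
    · exact hxi (by exact_mod_cast h)
    · exact hA i₀ h
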